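/- arXiv:math/0506466 — 4 statements merged into one kernel-verified Lean document; each statement's English description precedes it below -/
import Mathlib

section
/- Let K = v + ℝ_{≥0}w_1 + ⋯ + ℝ_{≥0}w_d be a simple rational cone in ℝ^d with fundamental parallelepiped P_K. Then (∏_{i=1}^d (1 − x^{w_i})) · S_K = S_{P_K} as formal Laurent series; explicitly, for every m ∈ ℤ^d, Σ_{T ⊆ {1,…,d}} (−1)^{|T|} · 1_{K∩ℤ^d}(m − Σ_{i∈T} w_i) = 1_{P_K∩ℤ^d}(m). -/
open scoped BigOperators Classical

noncomputable section

/-- The real vector corresponding to an integer vector. -/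
def toR (d : ℕ) (m : Fin d → ℤ) : Fin d → ℝ := fun i => (m i : ℝ)

/-- The standard dot product on `ℝ^d`. -/
def dotR (d : ℕ) (x y : Fin d → ℝ) : ℝ := ∑ i, x i * y i

/-- Laurent polynomials `ℂ[x₁^{±1},…,x_d^{±1}]`, represented by their coefficient functions. -/
abbrev LaurentPoly (d : ℕ) := (Fin d → ℤ) →₀ ℂ

/-- The integer-point generating series of a subset of `ℝ^d`: the function `ℤ^d → ℂ`
equal to `1` on `S ∩ ℤ^d` and `0` elsewhere. -/
def genSeries (d : ℕ) (S : Set (Fin d → ℝ)) : (Fin d → ℤ) → ℂ :=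
  fun m => if toR d m ∈ S then 1 else 0

/-- The action of a Laurent polynomial on a formal Laurent series,
`(x^w · S)(m) = S(m - w)` extended linearly. -/
def actLP (d : ℕ) (g : LaurentPoly d) (S : (Fin d → ℤ) → ℂ) : (Fin d → ℤ) → ℂ :=
  fun m => ∑ w ∈ g.support, g w * S (m - w)

/-- The series of a Laurent polynomial `f`, i.e. `Σ_m f_m x^m` as a formal series. -/
def seriesOf (d : ℕ) (f : LaurentPoly d) : (Fin d → ℤ) → ℂ := fun m => f m

/-- The cone `v + ℝ_{≥0} w₁ + ⋯ + ℝ_{≥0} w_n`. -/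
def coneSet (d n : ℕ) (v : Fin d → ℝ) (w : Fin n → Fin d → ℤ) : Set (Fin d → ℝ) :=
  {y | ∃ lam : Fin n → ℝ, (∀ i, 0 ≤ lam i) ∧ y = v + ∑ i, lam i • toR d (w i)}

/-- The fundamental half-open parallelepiped `{v + Σ λᵢ wᵢ : 0 ≤ λᵢ < 1}`. -/
def parSet (d : ℕ) (v : Fin d → ℝ) (w : Fin d → Fin d → ℤ) : Set (Fin d → ℝ) :=
  {y | ∃ lam : Fin d → ℝ, (∀ i, 0 ≤ lam i ∧ lam i < 1) ∧ y = v + ∑ i, lam i • toR d (w i)}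

/-- A simple rational cone: `v + ℝ_{≥0} w₁ + ⋯ + ℝ_{≥0} w_d` with `w₁,…,w_d ∈ ℤ^d`
linearly independent. -/
def IsSimpleCone (d : ℕ) (K : Set (Fin d → ℝ)) : Prop :=
  ∃ (v : Fin d → ℝ) (w : Fin d → Fin d → ℤ),
    LinearIndependent ℝ (fun i => toR d (w i)) ∧ K = coneSet d d v w

/-- Membership in the module `PL` of polyhedral Laurent series: a finite
`ℂ[x₁^{±1},…,x_d^{±1}]`-linear combination of the series of simple rational cones. -/
def MemPL (d : ℕ) (S : (Fin d → ℤ) → ℂ) : Prop :=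
  ∃ (n : ℕ) (g : Fin n → LaurentPoly d) (K : Fin n → Set (Fin d → ℝ)),
    (∀ i, IsSimpleCone d (K i)) ∧ S = ∑ i, actLP d (g i) (genSeries d (K i))

/-- The field of rational functions `ℂ(x₁,…,x_d)`. -/
abbrev RatF (d : ℕ) := FractionRing (MvPolynomial (Fin d) ℂ)

/-- The monomial `x^w`, `w ∈ ℤ^d`, as a rational function. -/
def ratMon (d : ℕ) (w : Fin d → ℤ) : RatF d :=
  ∏ i, (algebraMap (MvPolynomial (Fin d) ℂ) (RatF d) (MvPolynomial.X i)) ^ (w i)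

/-- A Laurent polynomial as a rational function. -/
def toRat (d : ℕ) (g : LaurentPoly d) : RatF d :=
  ∑ w ∈ g.support, algebraMap (MvPolynomial (Fin d) ℂ) (RatF d) (MvPolynomial.C (g w)) * ratMon d w

/-- `σ_S(x) = Σ_{m ∈ S ∩ ℤ^d} x^m`, as a rational function (for `S` with finitely many
integer points). -/
def sigmaSet (d : ℕ) (S : Set (Fin d → ℝ)) : RatF d :=
  ∑ᶠ m ∈ {m : Fin d → ℤ | toR d m ∈ S}, ratMon d m

/-- `φ : PL → ℂ(x₁,…,x_d)` is the `ℂ[x₁^{±1},…,x_d^{±1}]`-module homomorphism sending the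
series `S_K` of a simple rational cone `K` to `σ_{P_K}(x) / Π (1 - x^{wᵢ})`. -/
def IsPhi (d : ℕ) (φ : ((Fin d → ℤ) → ℂ) → RatF d) : Prop :=
  (∀ S T, MemPL d S → MemPL d T → φ (S + T) = φ S + φ T) ∧
  (∀ (g : LaurentPoly d) (S), MemPL d S → φ (actLP d g S) = toRat d g * φ S) ∧
  (∀ (v : Fin d → ℝ) (w : Fin d → Fin d → ℤ),
      LinearIndependent ℝ (fun i => toR d (w i)) →
      φ (genSeries d (coneSet d d v w)) =
        sigmaSet d (parSet d v w) / ∏ i, (1 - ratMon d (w i)))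

/-- A convex polyhedron: an intersection of finitely many closed halfspaces. -/
def IsPolyhedron (d : ℕ) (P : Set (Fin d → ℝ)) : Prop :=
  ∃ (n : ℕ) (a : Fin n → Fin d → ℝ) (b : Fin n → ℝ),
    P = {y | ∀ i, dotR d (a i) y ≤ b i}

/-- The polar `P^∨ = {x : ⟨x,y⟩ ≤ 1 for all y ∈ P}`. -/
def polar (d : ℕ) (P : Set (Fin d → ℝ)) : Set (Fin d → ℝ) :=
  {x | ∀ y ∈ P, dotR d x y ≤ 1}

/-!
In the basis `w₁, …, w_d` write `m - v = Σ μᵢ wᵢ`. Then `m - Σ_{i ∈ T} wᵢ ∈ K` iff `μᵢ ≥ 1` for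
`i ∈ T` and `μᵢ ≥ 0` for `i ∉ T`, so the summand for `T` factors over the coordinates and the
alternating sum over `T` is the expansion of `∏ᵢ ([μᵢ ≥ 0] - [μᵢ ≥ 1]) = ∏ᵢ [0 ≤ μᵢ < 1]`,
which is the indicator of `P_K` at `m`.
-/

theorem Finset.sum_neg_one_pow_card_mul_prod_ite {ι R : Type*} [Fintype ι] [DecidableEq ι]
    [CommRing R] (f g : ι → R) :
    ∑ T : Finset ι, (-1 : R) ^ T.card * ∏ i, (if i ∈ T then f i else g i) =
      ∏ i, (g i - f i) := by
  rw [Finset.prod_sub, Finset.powerset_univ]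
  refine Finset.sum_congr rfl fun T _ => ?_
  rw [Finset.prod_ite, Finset.filter_mem_eq_inter, Finset.univ_inter, Finset.filter_not,
    Finset.filter_mem_eq_inter, Finset.univ_inter]
  ring

theorem Module.Basis.exists_eq_add_sum_smul_iff {ι R M : Type*} [Fintype ι] [Ring R]
    [AddCommGroup M] [Module R M] (B : Module.Basis ι R M) (p : (ι → R) → Prop) (v y : M) :
    (∃ c : ι → R, p c ∧ y = v + ∑ i, c i • B i) ↔ p (B.repr (y - v)) := by
  constructor
  · rintro ⟨c, hc, rfl⟩
    rwa [add_sub_cancel_left, B.repr_sum_self]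
  · exact fun h => ⟨B.repr (y - v), h, by rw [B.sum_repr, add_sub_cancel]⟩

theorem toR_sub_sum (d : ℕ) (m : Fin d → ℤ) {ι : Type*} (T : Finset ι) (w : ι → Fin d → ℤ) :
    toR d (m - ∑ i ∈ T, w i) = toR d m - ∑ i ∈ T, toR d (w i) := by
  funext k
  simp [toR]

theorem ite_nonneg_sub_ite_one_le {α R : Type*} [Semiring α] [LinearOrder α] [ZeroLEOneClass α]
    [Ring R] (x : α) :
    ((if 0 ≤ x then 1 else 0) : R) - (if 1 ≤ x then 1 else 0) =
      if 0 ≤ x ∧ x < 1 then 1 else 0 := by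
  by_cases h0 : 0 ≤ x <;> by_cases h1 : 1 ≤ x <;> simp [h0, h1]
  exact absurd (zero_le_one.trans h1) h0

section Cone

variable {d : ℕ} {w : Fin d → Fin d → ℤ}

def coneBasis (hw : LinearIndependent ℝ (fun i => toR d (w i))) :
    Module.Basis (Fin d) ℝ (Fin d → ℝ) :=
  Module.Basis.mk hw (hw.span_eq_top_of_card_eq_finrank' (by simp)).ge

variable (hw : LinearIndependent ℝ (fun i => toR d (w i)))

theorem coe_coneBasis : ⇑(coneBasis hw) = fun i => toR d (w i) :=
  Module.Basis.coe_mk _ _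

theorem mem_coneSet_iff (v y : Fin d → ℝ) :
    y ∈ coneSet d d v w ↔ ∀ i, 0 ≤ (coneBasis hw).repr (y - v) i := by
  rw [← (coneBasis hw).exists_eq_add_sum_smul_iff (fun c => ∀ i, 0 ≤ c i), coe_coneBasis hw]
  rfl

theorem mem_parSet_iff (v y : Fin d → ℝ) :
    y ∈ parSet d v w ↔
      ∀ i, 0 ≤ (coneBasis hw).repr (y - v) i ∧ (coneBasis hw).repr (y - v) i < 1 := by
  rw [← (coneBasis hw).exists_eq_add_sum_smul_iff (fun c => ∀ i, 0 ≤ c i ∧ c i < 1),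
    coe_coneBasis hw]
  rfl

theorem coneBasis_repr_sub_sum (v : Fin d → ℝ) (m : Fin d → ℤ) (T : Finset (Fin d)) (i : Fin d) :
    (coneBasis hw).repr (toR d (m - ∑ j ∈ T, w j) - v) i =
      (coneBasis hw).repr (toR d m - v) i - if i ∈ T then 1 else 0 := by
  have : toR d (m - ∑ j ∈ T, w j) - v = toR d m - v - ∑ j ∈ T, coneBasis hw j := by
    rw [toR_sub_sum, coe_coneBasis hw]
    abel
  simp [this, Finsupp.single_apply, eq_comm]

theorem genSeries_coneSet_sub_sum (v : Fin d → ℝ) (m : Fin d → ℤ) (T : Finset (Fin d)) :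
    genSeries d (coneSet d d v w) (m - ∑ j ∈ T, w j) =
      ∏ i, if i ∈ T then (if 1 ≤ (coneBasis hw).repr (toR d m - v) i then 1 else 0)
        else (if 0 ≤ (coneBasis hw).repr (toR d m - v) i then 1 else 0) := by
  set μ := (coneBasis hw).repr (toR d m - v)
  have hfactor : ∀ i,
      (if i ∈ T then (if 1 ≤ μ i then 1 else 0) else (if 0 ≤ μ i then 1 else 0)) =
        if 0 ≤ μ i - if i ∈ T then 1 else 0 then (1 : ℂ) else 0 := by
    intro i
    by_cases hi : i ∈ T <;> simp [hi, sub_nonneg]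
  rw [Finset.prod_congr rfl fun i _ => hfactor i, Fintype.prod_boole, genSeries,
    mem_coneSet_iff hw]
  simp only [coneBasis_repr_sub_sum hw]
  -- the two sides differ only in their `Decidable` instances
  congr

end Cone

/-- For a simple rational cone `K` with fundamental parallelepiped `P_K`,
`(Π (1 - x^{wᵢ})) · S_K = S_{P_K}` as formal Laurent series: for every `m ∈ ℤ^d`,
`Σ_{T ⊆ {1,…,d}} (-1)^{|T|} 1_{K∩ℤ^d}(m - Σ_{i∈T} wᵢ) = 1_{P_K∩ℤ^d}(m)`. -/
theorem statement1 (d : ℕ) (v : Fin d → ℝ) (w : Fin d → Fin d → ℤ)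
    (hw : LinearIndependent ℝ (fun i => toR d (w i))) :
    ∀ m : Fin d → ℤ,
      ∑ T : Finset (Fin d),
          (-1 : ℂ) ^ T.card * genSeries d (coneSet d d v w) (m - ∑ i ∈ T, w i) =
        genSeries d (parSet d v w) m := by
  intro m
  simp only [genSeries_coneSet_sub_sum hw, Finset.sum_neg_one_pow_card_mul_prod_ite,
    ite_nonneg_sub_ite_one_le, Fintype.prod_boole]
  rw [genSeries, mem_parSet_iff hw]
  congr

end
end

section
/- Let P ⊂ ℝ^d be a d-dimensional simplex (the intersection of d+1 closed halfspaces, one for each facet; equivalently the convex hull of d+1 affinely independent points). Then for every m ∈ ℤ^d, Σ_F (−1)^{dim F} · 1_{K_F}(m) = 0, where the sum runs over all faces F of P including the empty face ∅ (with dim ∅ = −1 and tangent cone K_∅ = P) and P itself (with K_P = ℝ^d); equivalently, 0 = Σ_F (−1)^{dim F} S_{K_F} as formal Laurent series. -/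
open scoped BigOperators Classical

noncomputable section

/-- **Theorem, simplices.** Let `P ⊂ ℝ^d` be a `d`-simplex with vertices
`p₀,…,p_d` and barycentric coordinates `lam`. The faces correspond to subsets
`T ⊆ {0,…,d}` (with `dim F_T = |T| - 1`, the empty face being `T = ∅` with tangent cone
`P`, and `T` everything giving `K_P = ℝ^d`), and the tangent cone of `F_T` is
`K_{F_T} = {y : lam(y)_j ≥ 0 for all j ∉ T}`. Then for every `m ∈ ℤ^d`,
`Σ_F (-1)^{dim F} 1_{K_F}(m) = 0`. -/
theorem statement6 (d : ℕ) (p : Fin (d + 1) → Fin d → ℝ)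
    (hp : AffineIndependent ℝ p)
    (lam : (Fin d → ℝ) → Fin (d + 1) → ℝ)
    (hlam : ∀ y, (∑ i, lam y i) = 1 ∧ y = ∑ i, lam y i • p i) :
    ∀ m : Fin d → ℤ,
      ∑ T : Finset (Fin (d + 1)),
        (-1 : ℂ) ^ ((T.card : ℤ) - 1) *
          (if ∀ j ∉ T, 0 ≤ lam (toR d m) j then 1 else 0) = 0 := by
  intro m
  set l := lam (toR d m) with hl
  have hsum : (∑ i, l i) = 1 := (hlam (toR d m)).1
  set B : Finset (Fin (d + 1)) := Finset.univ.filter (fun j => ¬ 0 ≤ l j) with hBdef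
  -- some coordinate is nonnegative
  have hj : ∃ j, 0 ≤ l j := by
    by_contra h
    push_neg at h
    have : (∑ i, l i) ≤ 0 := Finset.sum_nonpos fun i _ => (h i).le
    linarith
  obtain ⟨j0, hj0⟩ := hj
  have hBc : Bᶜ.Nonempty := ⟨j0, by simp [hBdef, hj0]⟩
  have hiff : ∀ T : Finset (Fin (d + 1)), (∀ j ∉ T, 0 ≤ l j) ↔ B ⊆ T := by
    intro T
    constructor
    · intro h j hjB
      simp only [hBdef, Finset.mem_filter, Finset.mem_univ, true_and] at hjB
      by_contra hjT
      exact hjB (h j hjT)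
    · intro h j hjT
      by_contra hneg
      exact hjT (h (Finset.mem_filter.mpr ⟨Finset.mem_univ j, hneg⟩))
  have step1 :
      (∑ T : Finset (Fin (d + 1)),
        (-1 : ℂ) ^ ((T.card : ℤ) - 1) * (if ∀ j ∉ T, 0 ≤ l j then 1 else 0)) =
      ∑ T ∈ Finset.univ.filter (fun T => B ⊆ T),
        (-1 : ℂ) ^ ((T.card : ℤ) - 1) := by
    rw [Finset.sum_filter]
    refine Finset.sum_congr rfl fun T _ => ?_
    by_cases h : B ⊆ T
    · rw [if_pos ((hiff T).2 h), if_pos h, mul_one]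
    · have hne : ¬ (∀ j ∉ T, 0 ≤ l j) := fun hh => h ((hiff T).1 hh)
      rw [if_neg hne, if_neg h, mul_zero]
  have step2 :
      (∑ T ∈ Finset.univ.filter (fun T => B ⊆ T),
        (-1 : ℂ) ^ ((T.card : ℤ) - 1)) =
      ∑ S ∈ Bᶜ.powerset, (-1 : ℂ) ^ (((B.card + S.card : ℕ) : ℤ) - 1) := by
    refine Finset.sum_nbij' (fun T => T \ B) (fun S => B ∪ S) ?_ ?_ ?_ ?_ ?_
    · intro T hT
      simp only [Finset.mem_filter] at hT
      simp only [Finset.mem_powerset]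
      intro x hx
      simp only [Finset.mem_sdiff] at hx
      simp [Finset.mem_compl, hx.2]
    · intro S hS
      simp only [Finset.mem_powerset] at hS
      simp
    · intro T hT
      simp only [Finset.mem_filter, Finset.mem_univ, true_and] at hT
      exact Finset.union_sdiff_of_subset hT
    · intro S hS
      simp only [Finset.mem_powerset] at hS
      have hdisj : Disjoint B S := by
        refine Finset.disjoint_left.mpr fun a haB haS => ?_
        have := hS haS
        simp only [Finset.mem_compl] at this
        exact this haB
      show (B ∪ S) \ B = S
      rw [Finset.union_sdiff_cancel_left hdisj]
    · intro T hT
      simp only [Finset.mem_filter, Finset.mem_univ, true_and] at hT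
      have : T.card = B.card + (T \ B).card := by
        rw [← Finset.card_sdiff_add_card_eq_card hT]
        ring
      rw [this]
  have step3 :
      (∑ S ∈ Bᶜ.powerset, (-1 : ℂ) ^ (((B.card + S.card : ℕ) : ℤ) - 1)) =
      (-1 : ℂ) ^ ((B.card : ℤ) - 1) * ∑ S ∈ Bᶜ.powerset, (-1 : ℂ) ^ S.card := by
    rw [Finset.mul_sum]
    refine Finset.sum_congr rfl fun S _ => ?_
    have : ((B.card + S.card : ℕ) : ℤ) - 1 = ((B.card : ℤ) - 1) + (S.card : ℤ) := by
      push_cast; ring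
    rw [this, zpow_add₀ (by norm_num : (-1 : ℂ) ≠ 0), zpow_natCast]
  have step4 : (∑ S ∈ Bᶜ.powerset, (-1 : ℂ) ^ S.card) = 0 := by
    exact_mod_cast Finset.sum_powerset_neg_one_pow_card_of_nonempty hBc
  rw [← hl] at *
  rw [step1, step2, step3, step4, mul_zero]

end
end

section
/- Let v ∈ ℝ^d, let w_1, …, w_d ∈ ℤ^d be linearly independent, and let ξ, ξ' ∈ ℝ^d satisfy ξ·w_i ≠ 0 ≠ ξ'·w_i for all i, with sign(ξ·w_i) = sign(ξ'·w_i) for all i ≠ j and sign(ξ·w_j) = −sign(ξ'·w_j) for one index j. Then the half-open cones K_{ξ,v} and K_{ξ',v} (where K_{η,v} := v + Σ_{η·w_i>0} ℝ_{≥0}w_i + Σ_{η·w_i<0} ℝ_{<0}w_i) are disjoint, and their union is the cone K := v + ℝw_j + Σ_{i≠j, ξ·w_i>0} ℝ_{≥0}w_i + Σ_{i≠j, ξ·w_i<0} ℝ_{<0}w_i, which satisfies w_j + K = K. Consequently S_{K_{ξ,v}} + S_{K_{ξ',v}} = S_K, and φ(S_{K_{ξ,v}}) = −φ(S_{K_{ξ',v}})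 in ℂ(x_1,…,x_d). -/
open scoped BigOperators Classical

noncomputable section

/-- The half-open cone `K_{ξ,v} = v + Σ_{w·ξ>0} ℝ_{≥0} w + Σ_{w·ξ<0} ℝ_{<0} w`. -/
def lvCone (d : ℕ) (v : Fin d → ℝ) (w : Fin d → Fin d → ℤ) (xi : Fin d → ℝ) :
    Set (Fin d → ℝ) :=
  {y | ∃ lam : Fin d → ℝ,
    (∀ i, (0 < dotR d xi (toR d (w i)) → 0 ≤ lam i) ∧
          (dotR d xi (toR d (w i)) < 0 → lam i < 0)) ∧
    y = v + ∑ i, lam i • toR d (w i)}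

/-- The cone `v + ℝ w_j + Σ_{i≠j, ξ·wᵢ>0} ℝ_{≥0} wᵢ + Σ_{i≠j, ξ·wᵢ<0} ℝ_{<0} wᵢ`
(the coefficient of `w j` is unconstrained). -/
def lvConeLine (d : ℕ) (v : Fin d → ℝ) (w : Fin d → Fin d → ℤ) (xi : Fin d → ℝ)
    (j : Fin d) : Set (Fin d → ℝ) :=
  {y | ∃ lam : Fin d → ℝ,
    (∀ i, i ≠ j → (0 < dotR d xi (toR d (w i)) → 0 ≤ lam i) ∧
                  (dotR d xi (toR d (w i)) < 0 → lam i < 0)) ∧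
    y = v + ∑ i, lam i • toR d (w i)}

/-! The three cones are images of coefficient boxes under the injective affine map
`λ ↦ v + Σ λᵢ wᵢ`; the boxes for `ξ` and `ξ'` differ only in the `j`-th constraint
(`λⱼ ≥ 0` versus `λⱼ < 0`), so they are disjoint with union the box in which `λⱼ` is free,
and that box is invariant under `λⱼ ↦ λⱼ + t`.

For `φ`, the series of the half-open cones must lie in `PL`. By Cramer's rule the coefficients
of lattice points lie in a coset of `D⁻¹ℤ`, so on the lattice each strict constraint `λᵢ < 0`
becomes `λᵢ ≤ -δᵢ`, and `K_{ξ,v}` has the same lattice points as a closed simple cone. Then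
`S_K = S_{K_{ξ,v}} + S_{K_{ξ',v}} ∈ PL` is fixed by `x^{w_j}`, so `(1 - x^{w_j}) φ(S_K) = 0`,
hence `φ(S_K) = 0` as `x^{w_j} ≠ 1`, and additivity of `φ` finishes the proof. -/

section Coefficients
variable {d : ℕ}

lemma toR_sub (m a : Fin d → ℤ) : toR d (m - a) = toR d m - toR d a := by
  funext i; simp [toR]

lemma toR_zero : toR d 0 = 0 := by
  funext i; simp [toR]

lemma toR_neg (m : Fin d → ℤ) : toR d (-m) = -toR d m := by
  funext i; simp [toR]

/-- Cramer's rule, with `D = (det W)²` rather than `det W` so that `D > 0`. -/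
lemma exists_coeff_mem_coset (v : Fin d → ℝ) {w : Fin d → Fin d → ℤ}
    (hw : LinearIndependent ℝ (fun i => toR d (w i))) :
    ∃ D > 0, ∃ a : Fin d → ℝ, ∀ (lam : Fin d → ℝ) (m : Fin d → ℤ),
      toR d m = v + ∑ i, lam i • toR d (w i) → ∀ i, ∃ k : ℤ, D * lam i = k + a i := by
  set W : Matrix (Fin d) (Fin d) ℤ := Matrix.of w
  set WR : Matrix (Fin d) (Fin d) ℝ := (Int.castRingHom ℝ).mapMatrix W
  have hdet : WR.det ≠ 0 := by
    have : IsUnit WR := Matrix.linearIndependent_rows_iff_isUnit.mp hw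
    exact ((Matrix.isUnit_iff_isUnit_det _).mp this).ne_zero
  have hadj : WR.adjugate = (Int.castRingHom ℝ).mapMatrix W.adjugate :=
    ((Int.castRingHom ℝ).map_adjugate W).symm
  have hdetW : WR.det = (W.det : ℝ) := ((Int.castRingHom ℝ).map_det W).symm
  refine ⟨WR.det ^ 2, by positivity, fun i => -(WR.det * Matrix.vecMul v WR.adjugate i),
    fun lam m hm i => ⟨W.det * Matrix.vecMul m W.adjugate i, ?_⟩⟩
  have hlam : Matrix.vecMul lam WR = toR d m - v := by
    rw [hm]; funext k; simp [Matrix.vecMul, dotProduct, WR, W, toR, Finset.sum_apply]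
  have hcramer : WR.det • lam = Matrix.vecMul (toR d m - v) WR.adjugate := by
    rw [← hlam, Matrix.vecMul_vecMul, Matrix.mul_adjugate, Matrix.vecMul_smul,
      Matrix.vecMul_one]
  have hint : Matrix.vecMul (toR d m) WR.adjugate i = (Matrix.vecMul m W.adjugate i : ℤ) := by
    simp [hadj, Matrix.vecMul, dotProduct, toR]
  have := congrFun hcramer i
  rw [Matrix.sub_vecMul, Pi.sub_apply, hint, Pi.smul_apply, smul_eq_mul] at this
  rw [Int.cast_mul, ← hdetW]
  linear_combination WR.det * this

lemma exists_pos_forall_neg_le (D a : ℝ) (hD : 0 < D) :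
    ∃ δ > 0, ∀ (t : ℝ) (k : ℤ), D * t = k + a → t < 0 → t ≤ -δ := by
  refine ⟨(1 - a - ⌈-a⌉) / D, div_pos (by linarith [Int.ceil_lt_add_one (-a)]) hD,
    fun t k hk ht => ?_⟩
  have hk' : k + 1 ≤ ⌈-a⌉ := Int.lt_ceil.mpr (by nlinarith)
  have hk'' : (k : ℝ) + 1 ≤ ⌈-a⌉ := by exact_mod_cast hk'
  rw [le_neg, div_le_iff₀ hD]
  linarith

def coeffMap (d : ℕ) (v : Fin d → ℝ) (w : Fin d → Fin d → ℤ) (lam : Fin d → ℝ) : Fin d → ℝ :=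
  v + ∑ i, lam i • toR d (w i)

lemma coeffMap_injective (v : Fin d → ℝ) {w : Fin d → Fin d → ℤ}
    (hw : LinearIndependent ℝ (fun i => toR d (w i))) : Function.Injective (coeffMap d v w) :=
  fun lam mu h => funext (Fintype.linearIndependent_iffₛ.mp hw lam mu (add_left_cancel h))

lemma coeffMap_add_single (v : Fin d → ℝ) (w : Fin d → Fin d → ℤ) (lam : Fin d → ℝ)
    (j : Fin d) (t : ℝ) :
    coeffMap d v w (lam + Pi.single j t) = t • toR d (w j) + coeffMap d v w lam := by
  have hsingle : ∑ i, (Pi.single j t : Fin d → ℝ) i • toR d (w i) = t • toR d (w j) := by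
    rw [Finset.sum_eq_single j (fun i _ hi => by simp [Pi.single_eq_of_ne hi]) (by simp)]
    simp
  simp only [coeffMap, Pi.add_apply, add_smul, Finset.sum_add_distrib, hsingle]
  abel

end Coefficients

section Cones
variable {d : ℕ}

def signCond (s t : ℝ) : Prop := (0 < s → 0 ≤ t) ∧ (s < 0 → t < 0)

lemma signCond_iff {s : ℝ} (hs : s ≠ 0) (t : ℝ) : signCond s t ↔ (0 < s ↔ 0 ≤ t) := by
  rcases hs.lt_or_gt with hs | hs
  · simp only [signCond, hs, not_lt_of_gt hs, true_implies, false_implies, true_and, false_iff,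
      not_le]
  · simp only [signCond, hs, not_lt_of_gt hs, true_implies, false_implies, and_true, true_iff]

variable (v : Fin d → ℝ) (w : Fin d → Fin d → ℤ)

lemma lvCone_eq_image (xi : Fin d → ℝ) :
    lvCone d v w xi =
      coeffMap d v w '' {lam | ∀ i, signCond (dotR d xi (toR d (w i))) (lam i)} := by
  ext y; exact ⟨fun ⟨lam, h, e⟩ => ⟨lam, h, e.symm⟩, fun ⟨lam, h, e⟩ => ⟨lam, h, e.symm⟩⟩

lemma lvConeLine_eq_image (xi : Fin d → ℝ) (j : Fin d) :
    lvConeLine d v w xi j =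
      coeffMap d v w '' {lam | ∀ i, i ≠ j → signCond (dotR d xi (toR d (w i))) (lam i)} := by
  ext y; exact ⟨fun ⟨lam, h, e⟩ => ⟨lam, h, e.symm⟩, fun ⟨lam, h, e⟩ => ⟨lam, h, e.symm⟩⟩

lemma disjoint_lvCone (hw : LinearIndependent ℝ (fun i => toR d (w i)))
    {xi xi' : Fin d → ℝ} {j : Fin d}
    (hj : dotR d xi (toR d (w j)) ≠ 0) (hj' : dotR d xi' (toR d (w j)) ≠ 0)
    (hflip : 0 < dotR d xi (toR d (w j)) ↔ dotR d xi' (toR d (w j)) < 0) :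
    Disjoint (lvCone d v w xi) (lvCone d v w xi') := by
  rw [lvCone_eq_image, lvCone_eq_image, Set.disjoint_image_iff (coeffMap_injective v hw),
    Set.disjoint_left]
  intro lam h h'
  have hneg := (not_lt.trans hj'.le_iff_lt).symm
  have := (signCond_iff hj _).mp (h j)
  have := (signCond_iff hj' _).mp (h' j)
  tauto

lemma lvCone_union_lvCone {xi xi' : Fin d → ℝ} {j : Fin d}
    (hxi : ∀ i, dotR d xi (toR d (w i)) ≠ 0) (hxi' : ∀ i, dotR d xi' (toR d (w i)) ≠ 0)
    (hsame : ∀ i, i ≠ j → (0 < dotR d xi (toR d (w i)) ↔ 0 < dotR d xi' (toR d (w i))))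
    (hflip : 0 < dotR d xi (toR d (w j)) ↔ dotR d xi' (toR d (w j)) < 0) :
    lvCone d v w xi ∪ lvCone d v w xi' = lvConeLine d v w xi j := by
  rw [lvCone_eq_image, lvCone_eq_image, lvConeLine_eq_image, ← Set.image_union]
  congr 1
  ext lam
  have hsame' : ∀ i, i ≠ j → (signCond (dotR d xi (toR d (w i))) (lam i) ↔
      signCond (dotR d xi' (toR d (w i))) (lam i)) := fun i hi => by
    rw [signCond_iff (hxi i), signCond_iff (hxi' i), hsame i hi]
  have hor : signCond (dotR d xi (toR d (w j))) (lam j) ∨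
      signCond (dotR d xi' (toR d (w j))) (lam j) := by
    have hneg := (not_lt.trans (hxi' j).le_iff_lt).symm
    rw [signCond_iff (hxi j), signCond_iff (hxi' j)]
    tauto
  simp only [Set.mem_union, Set.mem_ofPred_eq]
  constructor
  · rintro (h | h)
    · exact fun i _ => h i
    · exact fun i hi => (hsame' i hi).mpr (h i)
  · intro h
    refine hor.imp (fun hj i => ?_) (fun hj i => ?_) <;>
      rcases eq_or_ne i j with rfl | hi
    exacts [hj, h i hi, hj, (hsame' i hi).mp (h i hi)]

lemma image_add_lvConeLine (xi : Fin d → ℝ) (j : Fin d) :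
    (fun y => toR d (w j) + y) '' lvConeLine d v w xi j = lvConeLine d v w xi j := by
  have hadd : ∀ (t : ℝ) y, y ∈ lvConeLine d v w xi j →
      t • toR d (w j) + y ∈ lvConeLine d v w xi j := by
    rw [lvConeLine_eq_image]
    rintro t _ ⟨lam, hlam, rfl⟩
    exact ⟨lam + Pi.single j t, fun i hi => by simpa [Pi.single_eq_of_ne hi] using hlam i hi,
      coeffMap_add_single v w lam j t⟩
  ext y
  constructor
  · rintro ⟨x, hx, rfl⟩
    simpa using hadd 1 x hx
  · exact fun hy => ⟨(-1 : ℝ) • toR d (w j) + y, hadd (-1) y hy, by simp⟩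

lemma coneSet_signed_eq_image (P : Fin d → Prop) [DecidablePred P] (c : Fin d → ℝ) :
    coneSet d d (v + ∑ i, c i • toR d (w i)) (fun i => if P i then w i else -w i) =
      coeffMap d v w '' {lam | ∀ i, if P i then c i ≤ lam i else lam i ≤ c i} := by
  have hsum : ∀ mu : Fin d → ℝ, ∑ i, c i • toR d (w i) +
      ∑ i, mu i • toR d (if P i then w i else -w i) =
      ∑ i, (if P i then c i + mu i else c i - mu i) • toR d (w i) := fun mu => by
    rw [← Finset.sum_add_distrib]
    refine Finset.sum_congr rfl fun i _ => ?_
    split_ifs <;> simp [toR_neg, add_smul, sub_eq_add_neg]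
  ext y
  constructor
  · rintro ⟨mu, hmu, rfl⟩
    refine ⟨fun i => if P i then c i + mu i else c i - mu i, fun i => ?_, ?_⟩
    · have := hmu i; dsimp only; split_ifs <;> linarith
    · simp only [coeffMap, add_assoc, hsum]
  · rintro ⟨lam, hlam, rfl⟩
    refine ⟨fun i => if P i then lam i - c i else c i - lam i, fun i => ?_, ?_⟩
    · have := hlam i; dsimp only; split_ifs at this ⊢ <;> linarith
    · rw [add_assoc, hsum, coeffMap]
      refine congrArg (v + ·) (Finset.sum_congr rfl fun i _ => ?_)
      split_ifs <;> simp

/-- On lattice points the strict constraint `λᵢ < 0` can be replaced by `λᵢ ≤ -δᵢ`, since the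
coefficients of lattice points lie in a discrete coset (`exists_coeff_mem_coset`). -/
lemma exists_coneSet_mem_iff_lvCone_mem (hw : LinearIndependent ℝ (fun i => toR d (w i)))
    {xi : Fin d → ℝ} (hxi : ∀ i, dotR d xi (toR d (w i)) ≠ 0) :
    ∃ v' : Fin d → ℝ, ∀ m : Fin d → ℤ, toR d m ∈ lvCone d v w xi ↔
      toR d m ∈ coneSet d d v' (fun i => if 0 < dotR d xi (toR d (w i)) then w i else -w i) := by
  obtain ⟨D, hD, a, ha⟩ := exists_coeff_mem_coset v hw
  choose δ hδ hδle using fun i => exists_pos_forall_neg_le D (a i) hD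
  refine ⟨v + ∑ i, (if 0 < dotR d xi (toR d (w i)) then 0 else -δ i) • toR d (w i), fun m => ?_⟩
  rw [coneSet_signed_eq_image, lvCone_eq_image]
  constructor <;> rintro ⟨lam, hlam, hm⟩ <;> refine ⟨lam, fun i => ?_, hm⟩ <;>
    obtain ⟨k, hk⟩ := ha lam m hm.symm i
  · have := (signCond_iff (hxi i) _).mp (hlam i)
    split_ifs with hi
    · exact this.mp hi
    · exact hδle i _ k hk (not_le.mp (mt this.mpr hi))
  · have := hlam i
    rw [signCond_iff (hxi i)]
    split_ifs at this with hi
    · exact iff_of_true hi this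
    · exact iff_of_false hi (by linarith [hδ i])

end Cones

section SeriesAndPhi
variable {d : ℕ}

lemma genSeries_congr {A B : Set (Fin d → ℝ)} (h : ∀ m, toR d m ∈ A ↔ toR d m ∈ B) :
    genSeries d A = genSeries d B :=
  funext fun m => if_congr (h m) rfl rfl

lemma genSeries_add_of_disjoint {A B : Set (Fin d → ℝ)} (h : Disjoint A B) :
    genSeries d A + genSeries d B = genSeries d (A ∪ B) := by
  funext m
  by_cases hA : toR d m ∈ A <;> by_cases hB : toR d m ∈ B
  · exact absurd hB (Set.disjoint_left.mp h hA)
  all_goals simp [genSeries, hA, hB]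

lemma actLP_single_one_genSeries (a : Fin d → ℤ) (A : Set (Fin d → ℝ)) :
    actLP d (Finsupp.single a 1) (genSeries d A) = genSeries d ((toR d a + ·) '' A) := by
  funext m
  simp [actLP, genSeries, Set.image_add_left, toR_sub, neg_add_eq_sub]

lemma memPL_genSeries {K : Set (Fin d → ℝ)} (hK : IsSimpleCone d K) : MemPL d (genSeries d K) :=
  ⟨1, fun _ => Finsupp.single 0 1, fun _ => K, fun _ => hK, by
    simp [actLP_single_one_genSeries, toR_zero]⟩

lemma MemPL.add {S T : (Fin d → ℤ) → ℂ} (hS : MemPL d S) (hT : MemPL d T) : MemPL d (S + T) := by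
  obtain ⟨n, g, K, hK, rfl⟩ := hS
  obtain ⟨n', g', K', hK', rfl⟩ := hT
  refine ⟨n + n', Fin.append g g', Fin.append K K', Fin.addCases (by simpa) (by simpa), ?_⟩
  simp [Fin.sum_univ_add]

lemma linearIndependent_signed {w : Fin d → Fin d → ℤ}
    (hw : LinearIndependent ℝ (fun i => toR d (w i))) (P : Fin d → Prop) [DecidablePred P] :
    LinearIndependent ℝ (fun i => toR d (if P i then w i else -w i)) := by
  convert hw.units_smul (fun i => if P i then (1 : ℝˣ) else -1) using 1
  funext i
  by_cases hP : P i <;> simp [hP, toR_neg, Units.smul_def]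

lemma memPL_genSeries_lvCone (v : Fin d → ℝ) {w : Fin d → Fin d → ℤ}
    (hw : LinearIndependent ℝ (fun i => toR d (w i)))
    {xi : Fin d → ℝ} (hxi : ∀ i, dotR d xi (toR d (w i)) ≠ 0) :
    MemPL d (genSeries d (lvCone d v w xi)) := by
  obtain ⟨v', hv'⟩ := exists_coneSet_mem_iff_lvCone_mem v w hw hxi
  rw [genSeries_congr hv']
  exact memPL_genSeries ⟨v', _, linearIndependent_signed hw _, rfl⟩

lemma algebraMap_X_ne_zero (i : Fin d) :
    algebraMap (MvPolynomial (Fin d) ℂ) (RatF d) (MvPolynomial.X i) ≠ 0 :=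
  (map_ne_zero_iff _ (IsFractionRing.injective _ _)).mpr (MvPolynomial.X_ne_zero i)

lemma ratMon_add (a b : Fin d → ℤ) : ratMon d (a + b) = ratMon d a * ratMon d b := by
  simp only [ratMon, Pi.add_apply, zpow_add₀ (algebraMap_X_ne_zero _), Finset.prod_mul_distrib]

lemma ratMon_natCast (p : Fin d → ℕ) :
    ratMon d (fun i => (p i : ℤ)) = algebraMap (MvPolynomial (Fin d) ℂ) (RatF d)
      (MvPolynomial.monomial (Finsupp.equivFunOnFinite.symm p) 1) := by
  rw [MvPolynomial.monomial_eq, Finsupp.prod_fintype _ _ (fun i => pow_zero _)]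
  simp [ratMon, map_prod]

lemma ratMon_ne_one {a : Fin d → ℤ} (ha : a ≠ 0) : ratMon d a ≠ 1 := by
  intro h
  have hsplit :
      ratMon d (fun i => ((a i).toNat : ℤ)) = ratMon d (fun i => ((-a i).toNat : ℤ)) := by
    rw [← mul_one (ratMon d fun i => ((-a i).toNat : ℤ)), ← h, ← ratMon_add]
    congr 1; funext i; simp only [Pi.add_apply]; omega
  rw [ratMon_natCast, ratMon_natCast] at hsplit
  obtain ⟨hpq, -⟩ | ⟨h10, -⟩ := (MvPolynomial.monomial_eq_monomial_iff _ _ _ _).mp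
    (IsFractionRing.injective _ _ hsplit)
  · exact ha (funext fun i => by
      have : (a i).toNat = (-a i).toNat := congrFun (Finsupp.equivFunOnFinite.symm.injective hpq) i
      rw [Pi.zero_apply]; omega)
  · exact one_ne_zero h10

lemma toRat_single_one (a : Fin d → ℤ) : toRat d (Finsupp.single a 1) = ratMon d a := by
  simp [toRat]

lemma IsPhi.eq_zero_of_actLP_eq {φ : ((Fin d → ℤ) → ℂ) → RatF d} (hφ : IsPhi d φ)
    {S : (Fin d → ℤ) → ℂ} (hS : MemPL d S) {a : Fin d → ℤ} (ha : a ≠ 0)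
    (hinv : actLP d (Finsupp.single a 1) S = S) : φ S = 0 := by
  have h : (1 - ratMon d a) * φ S = 0 := by
    rw [sub_mul, one_mul, ← toRat_single_one, ← hφ.2.1 _ _ hS, hinv, sub_self]
  exact (mul_eq_zero.mp h).resolve_left (sub_ne_zero.mpr (ratMon_ne_one ha).symm)

end SeriesAndPhi

/-- If `ξ, ξ'` induce the same signs on all `wᵢ` except for the single
index `j`, then the half-open cones `K_{ξ,v}` and `K_{ξ',v}` are disjoint with union the
cone `K` with apex line `v + ℝ w_j`, which satisfies `w_j + K = K`; consequently
`S_{K_{ξ,v}} + S_{K_{ξ',v}} = S_K` and `φ(S_{K_{ξ,v}}) = -φ(S_{K_{ξ',v}})`. -/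
theorem statement11 (d : ℕ) (v : Fin d → ℝ) (w : Fin d → Fin d → ℤ)
    (hw : LinearIndependent ℝ (fun i => toR d (w i)))
    (xi xi' : Fin d → ℝ) (j : Fin d)
    (hxi : ∀ i, dotR d xi (toR d (w i)) ≠ 0)
    (hxi' : ∀ i, dotR d xi' (toR d (w i)) ≠ 0)
    (hsame : ∀ i, i ≠ j →
      (0 < dotR d xi (toR d (w i)) ↔ 0 < dotR d xi' (toR d (w i))))
    (hflip : 0 < dotR d xi (toR d (w j)) ↔ dotR d xi' (toR d (w j)) < 0) :
    Disjoint (lvCone d v w xi) (lvCone d v w xi') ∧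
    lvCone d v w xi ∪ lvCone d v w xi' = lvConeLine d v w xi j ∧
    (fun y => toR d (w j) + y) '' lvConeLine d v w xi j = lvConeLine d v w xi j ∧
    genSeries d (lvCone d v w xi) + genSeries d (lvCone d v w xi') =
      genSeries d (lvConeLine d v w xi j) ∧
    (∀ φ : ((Fin d → ℤ) → ℂ) → RatF d, IsPhi d φ →
      φ (genSeries d (lvCone d v w xi)) = - φ (genSeries d (lvCone d v w xi'))) := by
  have hdisj := disjoint_lvCone v w hw (hxi j) (hxi' j) hflip
  have hunion := lvCone_union_lvCone v w hxi hxi' hsame hflip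
  have hshift := image_add_lvConeLine v w xi j
  have hseries := (genSeries_add_of_disjoint hdisj).trans (congrArg _ hunion)
  refine ⟨hdisj, hunion, hshift, hseries, fun φ hφ => ?_⟩
  have hA := memPL_genSeries_lvCone v hw hxi
  have hB := memPL_genSeries_lvCone v hw hxi'
  have hwj : w j ≠ 0 := fun h => hw.ne_zero j (by rw [h, toR_zero])
  have hline : φ (genSeries d (lvConeLine d v w xi j)) = 0 :=
    hφ.eq_zero_of_actLP_eq (hseries ▸ hA.add hB) hwj
      (by rw [actLP_single_one_genSeries, hshift])
  have hadd := hφ.1 _ _ hA hB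
  rw [hseries, hline] at hadd
  exact eq_neg_of_add_eq_zero_left hadd.symm
end
end

section
/- Let P ⊂ ℝ^d be a full-dimensional polytope whose interior contains the origin, and let F be a nonempty face of P with tangent cone K_F (the intersection of the closed halfspaces defining the facets of P that contain F). Then the polar of the tangent cone equals the convex hull of the origin together with the dual face: (K_F)^∨ = conv({0} ∪ F^∨), where F^∨ = {x ∈ P^∨ : ⟨x,y⟩ = 1 for all y ∈ F}. -/
open scoped BigOperators Classical

noncomputable section

/-- Auxiliary: dot product is additive in the second argument. -/
lemma dotR_add_right' (d : ℕ) (x a b : Fin d → ℝ) :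
    dotR d x (a + b) = dotR d x a + dotR d x b := by
  simp [dotR, mul_add, Finset.sum_add_distrib]

lemma dotR_sub_right' (d : ℕ) (x a b : Fin d → ℝ) :
    dotR d x (a - b) = dotR d x a - dotR d x b := by
  simp [dotR, mul_sub, Finset.sum_sub_distrib]

lemma dotR_smul_right' (d : ℕ) (c : ℝ) (x y : Fin d → ℝ) :
    dotR d x (c • y) = c * dotR d x y := by
  simp [dotR, Finset.mul_sum]; apply Finset.sum_congr rfl; intros; ring

lemma dotR_smul_left' (d : ℕ) (c : ℝ) (x y : Fin d → ℝ) :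
    dotR d (c • x) y = c * dotR d x y := by
  simp [dotR, Finset.mul_sum]; apply Finset.sum_congr rfl; intros; ring

lemma dotR_add_left' (d : ℕ) (a b y : Fin d → ℝ) :
    dotR d (a + b) y = dotR d a y + dotR d b y := by
  simp [dotR, add_mul, Finset.sum_add_distrib]

lemma dotR_zero_left' (d : ℕ) (y : Fin d → ℝ) : dotR d 0 y = 0 := by
  simp [dotR]

/-- Auxiliary: from a relative interior point one can push slightly past it inside `F`. -/
lemma intrinsic_push' (d : ℕ) (F : Set (Fin d → ℝ)) (x₀ : Fin d → ℝ)
    (hx₀ : x₀ ∈ intrinsicInterior ℝ F) (y : Fin d → ℝ) (hy : y ∈ F) :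
    ∃ ε : ℝ, 0 < ε ∧ x₀ + ε • (x₀ - y) ∈ F := by
  obtain ⟨p, hp, hpx⟩ := hx₀
  have hyspan : y ∈ affineSpan ℝ F := subset_affineSpan ℝ F hy
  have hx₀span : x₀ ∈ affineSpan ℝ F := by rw [← hpx]; exact p.2
  have hmem : ∀ t : ℝ, y + t • (x₀ - y) ∈ affineSpan ℝ F := by
    intro t
    have := AffineSubspace.smul_vsub_vadd_mem (affineSpan ℝ F) t hx₀span hyspan hyspan
    simpa [vsub_eq_sub, vadd_eq_add, add_comm] using this
  set f : ℝ → affineSpan ℝ F := fun t => ⟨y + t • (x₀ - y), hmem t⟩ with hf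
  have hcont : Continuous f := by
    apply Continuous.subtype_mk
    continuity
  have hopen : IsOpen (f ⁻¹' interior (((↑) : affineSpan ℝ F → _) ⁻¹' F)) :=
    isOpen_interior.preimage hcont
  have h1 : (1:ℝ) ∈ f ⁻¹' interior (((↑) : affineSpan ℝ F → _) ⁻¹' F) := by
    have hfe : f 1 = p := Subtype.ext (by simp [hf, hpx])
    simp only [Set.mem_preimage, hfe]; exact hp
  obtain ⟨δ, hδ, hball⟩ := Metric.isOpen_iff.1 hopen 1 h1
  have ht : (1 + δ/2) ∈ f ⁻¹' interior (((↑) : affineSpan ℝ F → _) ⁻¹' F) := by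
    apply hball
    rw [Metric.mem_ball, Real.dist_eq]
    rw [abs_of_nonneg (by linarith)]
    linarith
  refine ⟨δ/2, by linarith, ?_⟩
  have h2 : f (1 + δ/2) ∈ (((↑) : affineSpan ℝ F → _) ⁻¹' F) := interior_subset ht
  have h3 : y + (1 + δ/2) • (x₀ - y) ∈ F := h2
  have heq : x₀ + (δ/2) • (x₀ - y) = y + (1 + δ/2) • (x₀ - y) := by module
  rw [heq]; exact h3

/-- For a full-dimensional polytope `P` with `0` in its interior and a
nonempty face `F` (an exposed face, with `x₀` a relative interior point of `F`, so that
the tangent cone of `F` is `K_F = {y : x₀ + t(y - x₀) ∈ P for some t > 0}`), the polar of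
the tangent cone is the convex hull of the origin and the dual face:
`(K_F)^∨ = conv({0} ∪ F^∨)` where `F^∨ = {x ∈ P^∨ : ⟨x,y⟩ = 1 ∀ y ∈ F}`. -/
theorem statement16 (d : ℕ) (V : Finset (Fin d → ℝ))
    (h0 : (0 : Fin d → ℝ) ∈ interior (convexHull ℝ (V : Set (Fin d → ℝ))))
    (F : Set (Fin d → ℝ))
    (hF : IsExposed ℝ (convexHull ℝ (V : Set (Fin d → ℝ))) F) (hFne : F.Nonempty)
    (x₀ : Fin d → ℝ) (hx₀ : x₀ ∈ intrinsicInterior ℝ F) :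
    polar d {y | ∃ t : ℝ, 0 < t ∧
        x₀ + t • (y - x₀) ∈ convexHull ℝ (V : Set (Fin d → ℝ))} =
      convexHull ℝ ({0} ∪
        {x | x ∈ polar d (convexHull ℝ (V : Set (Fin d → ℝ))) ∧
             ∀ y ∈ F, dotR d x y = 1}) := by
  classical
  set P := convexHull ℝ (V : Set (Fin d → ℝ)) with hPdef
  set K : Set (Fin d → ℝ) := {y | ∃ t : ℝ, 0 < t ∧ x₀ + t • (y - x₀) ∈ P} with hKdef
  set T : Set (Fin d → ℝ) :=
    {x | x ∈ polar d P ∧ ∀ y ∈ F, dotR d x y = 1} with hTdef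
  have hx₀F : x₀ ∈ F := intrinsicInterior_subset hx₀
  have hFP : F ⊆ P := hF.subset
  have hx₀P : x₀ ∈ P := hFP hx₀F
  have hx₀K : x₀ ∈ K := ⟨1, one_pos, by simpa using hx₀P⟩
  -- every element of {0} ∪ T lies in the polar of K
  have hdual : ({0} ∪ T : Set (Fin d → ℝ)) ⊆ polar d K := by
    rintro x (hx | hx)
    · intro y _
      simp only [Set.mem_singleton_iff] at hx
      rw [hx, dotR_zero_left']
      norm_num
    · obtain ⟨hxP, hxF⟩ := hx
      rintro y ⟨t, ht, hmem⟩
      have h1 := hxP _ hmem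
      rw [dotR_add_right', dotR_smul_right', dotR_sub_right', hxF x₀ hx₀F] at h1
      nlinarith
  have hconvK : Convex ℝ (polar d K) := by
    intro x hx y hy a b ha hb hab
    intro z hz
    rw [dotR_add_left', dotR_smul_left', dotR_smul_left']
    have := hx z hz
    have := hy z hz
    nlinarith
  apply Set.Subset.antisymm
  · -- polar K ⊆ conv({0} ∪ T)
    intro x hx
    have hs1 : dotR d x x₀ ≤ 1 := hx x₀ hx₀K
    have hle : ∀ p ∈ P, dotR d x p ≤ dotR d x x₀ := by
      intro p hp
      by_contra hcon
      push_neg at hcon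
      set a := dotR d x x₀
      set b := dotR d x p - a with hbdef
      have hb : 0 < b := by simp [hbdef]; linarith
      have hkey : ∀ s : ℝ, 0 < s → a + s * b ≤ 1 := by
        intro s hs
        have hmemK : x₀ + s • (p - x₀) ∈ K := by
          refine ⟨s⁻¹, inv_pos.2 hs, ?_⟩
          have : x₀ + s⁻¹ • (x₀ + s • (p - x₀) - x₀) = p := by
            rw [add_sub_cancel_left, smul_smul, inv_mul_cancel₀ (ne_of_gt hs), one_smul]
            module
          rw [this]; exact hp
        have := hx _ hmemK
        rw [dotR_add_right', dotR_smul_right', dotR_sub_right'] at this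
        have hbe : dotR d x p - a = b := rfl
        nlinarith
      have hs0 : (0:ℝ) < (1 - a)/b + 1 := by
        have : (0:ℝ) ≤ (1 - a)/b := div_nonneg (by linarith) (le_of_lt hb)
        linarith
      have := hkey _ hs0
      have hdm : (1 - a)/b * b = 1 - a := div_mul_cancel₀ _ (ne_of_gt hb)
      nlinarith
    rcases le_or_gt (dotR d x x₀) 0 with hs | hs
    · -- then x = 0
      have hx0 : x = 0 := by
        by_contra hne
        obtain ⟨ε, hε, hball⟩ := Metric.isOpen_iff.1 isOpen_interior 0 h0
        set c := ε / (2 * (‖x‖ + 1)) with hcdef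
        have hc : 0 < c := by positivity
        have hmem : c • x ∈ P := by
          apply interior_subset
          apply hball
          rw [Metric.mem_ball, dist_zero_right, norm_smul, Real.norm_eq_abs,
            abs_of_pos hc]
          have hxnorm : (0:ℝ) ≤ ‖x‖ := norm_nonneg x
          rw [hcdef]
          rw [div_mul_eq_mul_div, div_lt_iff₀ (by positivity)]
          nlinarith
        have h1 := hle _ hmem
        rw [dotR_smul_right'] at h1
        have hxx : 0 < dotR d x x := by
          have hex : ∃ i, x i ≠ 0 := by
            by_contra hno
            push_neg at hno
            exact hne (funext hno)
          obtain ⟨i, hi⟩ := hex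
          have : 0 < x i * x i := mul_self_pos.2 hi
          refine Finset.sum_pos' (fun j _ => mul_self_nonneg (x j)) ⟨i, Finset.mem_univ i, this⟩
        nlinarith
      rw [hx0]
      exact subset_convexHull ℝ _ (Or.inl rfl)
    · set s := dotR d x x₀ with hsdef
      set x' := s⁻¹ • x with hx'def
      have hx'P : x' ∈ polar d P := by
        intro p hp
        rw [hx'def, dotR_smul_left']
        have h1 := hle p hp
        have h2 : s⁻¹ * dotR d x p ≤ s⁻¹ * s :=
          mul_le_mul_of_nonneg_left h1 (le_of_lt (inv_pos.2 hs))
        rw [inv_mul_cancel₀ (ne_of_gt hs)] at h2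
        exact h2
      have hx'x₀ : dotR d x' x₀ = 1 := by
        rw [hx'def, dotR_smul_left']
        exact inv_mul_cancel₀ (ne_of_gt hs)
      have hx'F : ∀ y ∈ F, dotR d x' y = 1 := by
        intro y hy
        have hle1 : dotR d x' y ≤ 1 := hx'P y (hFP hy)
        by_contra hne
        have hlt : dotR d x' y < 1 := lt_of_le_of_ne hle1 hne
        obtain ⟨ε, hε, hz⟩ := intrinsic_push' d F x₀ hx₀ y hy
        have h1 := hx'P _ (hFP hz)
        rw [dotR_add_right', dotR_smul_right', dotR_sub_right', hx'x₀] at h1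
        nlinarith
      have hxeq : x = s • x' + (1 - s) • (0 : Fin d → ℝ) := by
        rw [hx'def, smul_smul, mul_inv_cancel₀ (ne_of_gt hs), one_smul, smul_zero, add_zero]
      have hmem1 : x' ∈ convexHull ℝ ({0} ∪ T) :=
        subset_convexHull ℝ _ (Or.inr ⟨hx'P, hx'F⟩)
      have hmem0 : (0 : Fin d → ℝ) ∈ convexHull ℝ ({0} ∪ T) :=
        subset_convexHull ℝ _ (Or.inl rfl)
      have := (convex_convexHull ℝ ({0} ∪ T)) hmem1 hmem0 (le_of_lt hs)
        (by linarith : (0:ℝ) ≤ 1 - s) (by ring : s + (1 - s) = 1)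
      rw [hxeq]
      exact this
  · exact convexHull_min hdual hconvK


end
end
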